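/- Let 0<q<1 be real, h1,h2,l1,l2,α1,α2,β real, t1,t2 nonzero complex, E ∈ ℂ, and let f be a function of a nonzero complex variable. Let x be a nonzero complex number, and suppose f satisfies (A⟨4⟩(·; l1,h2,h1,l2,α1,α2,β)f)(x) = E·f(x), i.e., x⁻¹(x−q^{l1+1/2}t1)(x−q^{h2+1/2}t2)f(x/q) + q^{α1+α2}x⁻¹(x−q^{h1−1/2}t1)(x−q^{l2−1/2}t2)f(qx) − [(q^{α1}+q^{α2})x + q^{(h1+h2+l1+l2+α1+α2)/2}(q^{β/2}+q^{−β/2})t1t2x⁻¹]f(x) = E·f(x). Define g1(y) = ((q^{h1+1/2}t1/y;q)_∞/(q^{l1+1/2}t1/y;q)_∞)·f(y) and g2(y) = y^{h1−l1}·((y/(q^{l1−1/2}t1);q)_∞/(y/(q^{h1−1/2}t1);q)_∞)·f(y). Then: (a) if x ∉ {q^{l1+n−1/2}t1 : n ∈ ℤ}, then (A⟨4⟩(·; h1,h2,l1,l2,α1,α2,β)g1)(x) = E·g1(x); (b) if x ∉ {q^{h1+n−1/2}t1 : n ∈ ℤ}, then (A⟨4⟩(·; h1,h2,l1,l2,α1,α2,β)g2)(x)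 = E·g2(x). -/

import Mathlib

open Filter Topology

/-- The infinite q-Pochhammer symbol `(a;q)_∞ = ∏_{j=0}^∞ (1 - q^j a)`. -/
noncomputable def qPochInf (q : ℝ) (a : ℂ) : ℂ := ∏' j : ℕ, (1 - (q : ℂ) ^ j * a)

/-- `q^r` for a real exponent `r`, using the principal branch of the complex power. -/
noncomputable def qpow (q : ℝ) (r : ℝ) : ℂ := (q : ℂ) ^ (r : ℂ)

/-- The fourth degenerate Ruijsenaars–van Diejen operator `A⟨4⟩` applied to `g` at `x`. -/
noncomputable def A4 (q : ℝ) (t1 t2 : ℂ) (h1 h2 l1 l2 a1 a2 b : ℝ) (g : ℂ → ℂ) (x : ℂ) : ℂ :=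
  x⁻¹ * (x - qpow q (h1 + 1/2) * t1) * (x - qpow q (h2 + 1/2) * t2) * g (x / (q : ℂ))
    + qpow q (a1 + a2) * x⁻¹ * (x - qpow q (l1 - 1/2) * t1) * (x - qpow q (l2 - 1/2) * t2) *
        g ((q : ℂ) * x)
    - ((qpow q a1 + qpow q a2) * x
        + qpow q ((h1 + h2 + l1 + l2 + a1 + a2) / 2) * (qpow q (b / 2) + qpow q (-(b / 2))) *
            t1 * t2 * x⁻¹) * g x

lemma qpow_eq {q : ℝ} (hq0 : 0 < q) (r : ℝ) : qpow q r = ((q ^ r : ℝ) : ℂ) := by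
  unfold qpow; rw [Complex.ofReal_cpow hq0.le]

lemma qpow_ne_zero {q : ℝ} (hq0 : 0 < q) (r : ℝ) : qpow q r ≠ 0 := by
  rw [qpow_eq hq0]; exact_mod_cast (Real.rpow_pos_of_pos hq0 r).ne'

lemma qpow_add {q : ℝ} (hq0 : 0 < q) (r s : ℝ) : qpow q (r + s) = qpow q r * qpow q s := by
  rw [qpow_eq hq0, qpow_eq hq0, qpow_eq hq0, Real.rpow_add hq0]; push_cast; ring

lemma qpow_one {q : ℝ} (hq0 : 0 < q) : qpow q 1 = (q : ℂ) := by
  rw [qpow_eq hq0, Real.rpow_one]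

lemma qpow_nat {q : ℝ} (hq0 : 0 < q) (j : ℕ) : (q : ℂ) ^ j = qpow q j := by
  rw [qpow_eq hq0, Real.rpow_natCast]; push_cast; ring

lemma hasProd_zero_of_zero {f : ℕ → ℂ} {k : ℕ} (hk : f k = 0) : HasProd f 0 := by
  have h : ∀ᶠ s : Finset ℕ in atTop, (0 : ℂ) = ∏ i ∈ s, f i := by
    filter_upwards [eventually_ge_atTop {k}] with s hs
    exact (Finset.prod_eq_zero (hs (Finset.mem_singleton_self k)) hk).symm
  exact Tendsto.congr' h tendsto_const_nhds

lemma summable_log_poch {q : ℝ} (hq0 : 0 < q) (hq1 : q < 1) (a : ℂ) :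
    Summable fun j : ℕ => Complex.log (1 - (q : ℂ) ^ j * a) := by
  have hsum : Summable fun j : ℕ => 3 / 2 * (q ^ j * ‖a‖) := by
    apply Summable.mul_left
    exact (summable_geometric_of_lt_one hq0.le hq1).mul_right _
  apply Summable.of_norm_bounded_eventually hsum
  rw [Nat.cofinite_eq_atTop]
  have ht : Filter.Tendsto (fun j : ℕ => q ^ j * ‖a‖) atTop (nhds 0) := by
    simpa using (tendsto_pow_atTop_nhds_zero_of_lt_one hq0.le hq1).mul_const (‖a‖)
  filter_upwards [ht.eventually_le_const (show (0:ℝ) < 1/2 by norm_num)] with j hj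
  have habs : ‖(q : ℂ) ^ j * a‖ = q ^ j * ‖a‖ := by
    rw [norm_mul, norm_pow, Complex.norm_real, Real.norm_eq_abs, abs_of_pos hq0]
  have hnorm : ‖-((q : ℂ) ^ j * a)‖ ≤ 1/2 := by
    rw [norm_neg, habs]; exact hj
  have := Complex.norm_log_one_add_half_le_self hnorm
  rw [show (1 : ℂ) + -((q : ℂ) ^ j * a) = 1 - (q : ℂ) ^ j * a by ring] at this
  refine this.trans ?_
  rw [norm_neg, habs]

lemma multipliable_poch {q : ℝ} (hq0 : 0 < q) (hq1 : q < 1) (a : ℂ) :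
    Multipliable fun j : ℕ => 1 - (q : ℂ) ^ j * a := by
  by_cases h : ∀ j : ℕ, 1 - (q : ℂ) ^ j * a ≠ 0
  · exact Complex.multipliable_of_summable_log (summable_log_poch hq0 hq1 a)
  · push_neg at h
    obtain ⟨k, hk⟩ := h
    exact ⟨0, hasProd_zero_of_zero hk⟩

lemma qPochInf_ne_zero {q : ℝ} (hq0 : 0 < q) (hq1 : q < 1) {a : ℂ}
    (h' : ∀ j : ℕ, 1 - (q : ℂ) ^ j * a ≠ 0) : qPochInf q a ≠ 0 := by
  have := Complex.cexp_tsum_eq_tprod (f := fun j : ℕ => 1 - (q : ℂ) ^ j * a)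
    (fun j => h' j) (summable_log_poch hq0 hq1 a)
  unfold qPochInf
  rw [← this]
  exact Complex.exp_ne_zero _

set_option maxHeartbeats 1000000 in
lemma qPochInf_rec {q : ℝ} (hq0 : 0 < q) (hq1 : q < 1) (a : ℂ) :
    qPochInf q a = (1 - a) * qPochInf q ((q : ℂ) * a) := by
  unfold qPochInf
  have hm : Multipliable fun n : ℕ => 1 - (q : ℂ) ^ (n + 1) * a := by
    apply (multipliable_poch hq0 hq1 ((q : ℂ) * a)).congr
    intro j
    rw [pow_succ]
    ring_nf
  rw [tprod_eq_zero_mul' hm]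
  congr 1
  · simp
  · apply tprod_congr
    intro j
    rw [pow_succ]
    ring_nf

lemma cpow_real_mul {r : ℝ} (hr : 0 < r) {z : ℂ} (hz : z ≠ 0) (c : ℂ) :
    ((r : ℂ) * z) ^ c = (r : ℂ) ^ c * z ^ c := by
  have hrC : (r : ℂ) ≠ 0 := by exact_mod_cast hr.ne'
  rw [Complex.cpow_def_of_ne_zero (mul_ne_zero hrC hz),
    Complex.cpow_def_of_ne_zero hz, Complex.cpow_def_of_ne_zero hrC,
    Complex.log_ofReal_mul hr hz, add_mul, Complex.exp_add]
  congr 2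
  rw [Complex.ofReal_log hr.le]

lemma ne_aux1 {q : ℝ} (hq0 : 0 < q) {x t1 : ℂ} (hx : x ≠ 0) {s : ℝ}
    (hxn : ∀ n : ℤ, x ≠ qpow q (s + n - 1/2) * t1) (r : ℝ) (m : ℤ) (hrm : r = s + m - 1/2)
    {w : ℂ} (hw : w = qpow q r * t1 / x) (j : ℕ) : 1 - (q : ℂ) ^ j * w ≠ 0 := by
  rw [sub_ne_zero]
  intro h
  apply hxn (m + j)
  have hqq : qpow q (s + ((m + j : ℤ) : ℝ) - 1/2) = (q : ℂ) ^ j * qpow q r := by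
    rw [qpow_nat hq0, ← qpow_add hq0]
    congr 1
    push_cast
    rw [hrm]; ring
  rw [hqq, mul_assoc]
  rw [hw] at h
  field_simp [hx] at h
  linear_combination h
lemma ne_aux2 {q : ℝ} (hq0 : 0 < q) {x t1 : ℂ} (hx : x ≠ 0) (ht1 : t1 ≠ 0) {s : ℝ}
    (hxn : ∀ n : ℤ, x ≠ qpow q (s + n - 1/2) * t1) (r : ℝ) (m : ℤ) (hrm : r = s + m - 1/2)
    {w : ℂ} (hw : w = x / (qpow q r * t1)) (j : ℕ) : 1 - (q : ℂ) ^ j * w ≠ 0 := by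
  rw [sub_ne_zero]
  intro h
  apply hxn (m - j)
  have hqq : (q : ℂ) ^ j * qpow q (s + ((m - j : ℤ) : ℝ) - 1/2) = qpow q r := by
    rw [qpow_nat hq0, ← qpow_add hq0]
    congr 1
    push_cast
    rw [hrm]; ring
  apply mul_left_cancel₀ (pow_ne_zero j (show (q:ℂ) ≠ 0 from Complex.ofReal_ne_zero.mpr hq0.ne'))
  rw [← mul_assoc, hqq]
  rw [hw] at h
  field_simp [hx, qpow_ne_zero hq0 r, ht1] at h
  exact h.symm


set_option maxHeartbeats 4000000 in
theorem stmt17 (q : ℝ) (hq0 : 0 < q) (hq1 : q < 1)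
    (h1 h2 l1 l2 a1 a2 b : ℝ) (t1 t2 : ℂ) (ht1 : t1 ≠ 0) (ht2 : t2 ≠ 0) (E : ℂ)
    (f : ℂ → ℂ) (x : ℂ) (hx : x ≠ 0)
    (hf : A4 q t1 t2 l1 h2 h1 l2 a1 a2 b f x = E * f x)
    (g1 g2 : ℂ → ℂ)
    (hg1 : ∀ y : ℂ, g1 y =
      (qPochInf q (qpow q (h1 + 1/2) * t1 / y) / qPochInf q (qpow q (l1 + 1/2) * t1 / y)) * f y)
    (hg2 : ∀ y : ℂ, g2 y =
      y ^ ((h1 - l1 : ℝ) : ℂ) *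
        (qPochInf q (y / (qpow q (l1 - 1/2) * t1)) / qPochInf q (y / (qpow q (h1 - 1/2) * t1))) *
        f y) :
    ((∀ n : ℤ, x ≠ qpow q (l1 + n - 1/2) * t1) →
      A4 q t1 t2 h1 h2 l1 l2 a1 a2 b g1 x = E * g1 x) ∧
    ((∀ n : ℤ, x ≠ qpow q (h1 + n - 1/2) * t1) →
      A4 q t1 t2 h1 h2 l1 l2 a1 a2 b g2 x = E * g2 x) := by
  have hqC : (q : ℂ) ≠ 0 := Complex.ofReal_ne_zero.mpr hq0.ne'
  set u := qpow q (h1 - 1/2) * t1 with hu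
  set v := qpow q (l1 - 1/2) * t1 with hv
  have hq12h : qpow q (h1 + 1/2) = (q : ℂ) * qpow q (h1 - 1/2) := by
    rw [show h1 + 1/2 = 1 + (h1 - 1/2) by ring, qpow_add hq0, qpow_one hq0]
  have hq12l : qpow q (l1 + 1/2) = (q : ℂ) * qpow q (l1 - 1/2) := by
    rw [show l1 + 1/2 = 1 + (l1 - 1/2) by ring, qpow_add hq0, qpow_one hq0]
  have hcu : qpow q (h1 + 1/2) * t1 = (q : ℂ) * u := by rw [hu, hq12h]; ring
  have hcv : qpow q (l1 + 1/2) * t1 = (q : ℂ) * v := by rw [hv, hq12l]; ring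
  have hbr : (l1 + h2 + h1 + l2 + a1 + a2) / 2 = (h1 + h2 + l1 + l2 + a1 + a2) / 2 := by ring
  clear_value u v
  constructor
  · -- part (a)
    intro hxn
    unfold A4 at hf ⊢
    rw [hbr] at hf
    rw [hcv] at hf
    rw [← hu] at hf
    simp only [hg1]
    rw [hcu, hcv]
    rw [← hv]
    rw [show (q : ℂ) * u / (x / (q : ℂ)) = (q : ℂ) * ((q : ℂ) * (u / x)) by
      field_simp [hx, hqC]]
    rw [show (q : ℂ) * v / (x / (q : ℂ)) = (q : ℂ) * ((q : ℂ) * (v / x)) by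
      field_simp [hx, hqC]]
    rw [show (q : ℂ) * u / ((q : ℂ) * x) = u / x from mul_div_mul_left u x hqC]
    rw [show (q : ℂ) * v / ((q : ℂ) * x) = v / x from mul_div_mul_left v x hqC]
    rw [show (q : ℂ) * u / x = (q : ℂ) * (u / x) from mul_div_assoc _ _ _]
    rw [show (q : ℂ) * v / x = (q : ℂ) * (v / x) from mul_div_assoc _ _ _]
    rw [qPochInf_rec hq0 hq1 (u / x), qPochInf_rec hq0 hq1 (v / x),
      qPochInf_rec hq0 hq1 ((q : ℂ) * (u / x)), qPochInf_rec hq0 hq1 ((q : ℂ) * (v / x))]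
    -- nonvanishing facts
    have hB2 : qPochInf q ((q : ℂ) * ((q : ℂ) * (v / x))) ≠ 0 := by
      apply qPochInf_ne_zero hq0 hq1
      apply ne_aux1 hq0 hx hxn (l1 + 3/2) 2 (by push_cast; ring)
      rw [hv, show l1 + 3/2 = 1 + (1 + (l1 - 1/2)) by ring, qpow_add hq0, qpow_add hq0,
        qpow_one hq0]
      field_simp
    have hfv1 : (1 : ℂ) - (q : ℂ) * (v / x) ≠ 0 := by
      have := ne_aux1 hq0 hx hxn (l1 + 1/2) 1 (by push_cast; ring)
        (w := (q : ℂ) * (v / x)) (by rw [hv, hq12l]; field_simp) 0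
      simpa using this
    have hfv0 : (1 : ℂ) - v / x ≠ 0 := by
      have := ne_aux1 hq0 hx hxn (l1 - 1/2) 0 (by push_cast; ring)
        (w := v / x) (by rw [hv]) 0
      simpa using this
    set A2 := qPochInf q ((q : ℂ) * ((q : ℂ) * (u / x))) with hA2
    set B2 := qPochInf q ((q : ℂ) * ((q : ℂ) * (v / x))) with hB2d
    clear_value A2 B2
    have hd1 : (1 - (q : ℂ) * (v / x)) * B2 ≠ 0 := mul_ne_zero hfv1 hB2
    have hd2 : (1 - v / x) * ((1 - (q : ℂ) * (v / x)) * B2) ≠ 0 := mul_ne_zero hfv0 hd1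
    have r1 : (x - (q : ℂ) * u) * (A2 / B2) =
        (x - (q : ℂ) * v) * ((1 - (q : ℂ) * (u / x)) * A2 / ((1 - (q : ℂ) * (v / x)) * B2)) := by
      rw [mul_div_assoc' (x - (q : ℂ) * u) A2 B2,
        mul_div_assoc' (x - (q : ℂ) * v) ((1 - (q : ℂ) * (u / x)) * A2)
          ((1 - (q : ℂ) * (v / x)) * B2),
        div_eq_div_iff hB2 hd1]
      field_simp [hx]
    have r2 : (x - v) * ((1 - u / x) * ((1 - (q : ℂ) * (u / x)) * A2) /
          ((1 - v / x) * ((1 - (q : ℂ) * (v / x)) * B2))) =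
        (x - u) * ((1 - (q : ℂ) * (u / x)) * A2 / ((1 - (q : ℂ) * (v / x)) * B2)) := by
      rw [mul_div_assoc' (x - v) ((1 - u / x) * ((1 - (q : ℂ) * (u / x)) * A2))
          ((1 - v / x) * ((1 - (q : ℂ) * (v / x)) * B2)),
        mul_div_assoc' (x - u) ((1 - (q : ℂ) * (u / x)) * A2) ((1 - (q : ℂ) * (v / x)) * B2),
        div_eq_div_iff hd2 hd1]
      field_simp [hx]
    conv_rhs => rw [mul_left_comm]
    rw [← hf]
    linear_combination (x⁻¹ * (x - qpow q (h2 + 1/2) * t2) * f (x / (q : ℂ))) * r1 +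
      (qpow q (a1 + a2) * x⁻¹ * (x - qpow q (l2 - 1/2) * t2) * f ((q : ℂ) * x)) * r2
  · -- part (b)
    intro hxn
    have hu0 : u ≠ 0 := by rw [hu]; exact mul_ne_zero (qpow_ne_zero hq0 _) ht1
    have hv0 : v ≠ 0 := by rw [hv]; exact mul_ne_zero (qpow_ne_zero hq0 _) ht1
    unfold A4 at hf ⊢
    rw [hbr] at hf
    rw [hcv] at hf
    rw [← hu] at hf
    simp only [hg2]
    rw [hcu]
    rw [← hv]
    -- recurrences for the Pochhammer arguments
    have rlowv : qPochInf q (x / (q : ℂ) / v) =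
        (1 - x / (q : ℂ) / v) * qPochInf q (x / v) := by
      have h := qPochInf_rec hq0 hq1 (x / (q : ℂ) / v)
      rwa [show (q : ℂ) * (x / (q : ℂ) / v) = x / v by field_simp] at h
    have rlowu : qPochInf q (x / (q : ℂ) / u) =
        (1 - x / (q : ℂ) / u) * qPochInf q (x / u) := by
      have h := qPochInf_rec hq0 hq1 (x / (q : ℂ) / u)
      rwa [show (q : ℂ) * (x / (q : ℂ) / u) = x / u by field_simp] at h
    have rmidv : qPochInf q (x / v) = (1 - x / v) * qPochInf q ((q : ℂ) * x / v) := by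
      have h := qPochInf_rec hq0 hq1 (x / v)
      rwa [show (q : ℂ) * (x / v) = (q : ℂ) * x / v from (mul_div_assoc _ _ _).symm] at h
    have rmidu : qPochInf q (x / u) = (1 - x / u) * qPochInf q ((q : ℂ) * x / u) := by
      have h := qPochInf_rec hq0 hq1 (x / u)
      rwa [show (q : ℂ) * (x / u) = (q : ℂ) * x / u from (mul_div_assoc _ _ _).symm] at h
    rw [rlowv, rlowu, rmidv, rmidu]
    -- powers of x
    have hWuv : (q : ℂ) ^ ((h1 - l1 : ℝ) : ℂ) = u / v := by
      have : qpow q (h1 - 1/2) = qpow q (h1 - l1) * qpow q (l1 - 1/2) := by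
        rw [← qpow_add hq0, show h1 - l1 + (l1 - 1/2) = h1 - 1/2 by ring]
      rw [hu, hv, this]
      rw [show qpow q (h1 - l1) * qpow q (l1 - 1/2) * t1 = qpow q (h1 - l1) * (qpow q (l1 - 1/2) * t1) from mul_assoc _ _ _]
      rw [mul_div_assoc, div_self (mul_ne_zero (qpow_ne_zero hq0 _) ht1), mul_one]
      rfl
    have hXq : ((q : ℂ) * x) ^ ((h1 - l1 : ℝ) : ℂ) =
        u / v * x ^ ((h1 - l1 : ℝ) : ℂ) := by
      rw [cpow_real_mul hq0 hx, hWuv]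
    have hXd : (x / (q : ℂ)) ^ ((h1 - l1 : ℝ) : ℂ) =
        x ^ ((h1 - l1 : ℝ) : ℂ) * (v / u) := by
      have h := cpow_real_mul hq0 (div_ne_zero hx hqC) ((h1 - l1 : ℝ) : ℂ)
      rw [show (q : ℂ) * (x / (q : ℂ)) = x by field_simp, hWuv] at h
      rw [h]
      field_simp
    rw [hXq, hXd]
    -- nonvanishing
    have hSu : qPochInf q ((q : ℂ) * x / u) ≠ 0 := by
      apply qPochInf_ne_zero hq0 hq1
      apply ne_aux2 hq0 hx ht1 hxn (h1 - 3/2) (-1) (by push_cast; ring)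
      rw [hu, show h1 - 1/2 = 1 + (h1 - 3/2) by ring, qpow_add hq0, qpow_one hq0]
      field_simp [hqC, ht1, qpow_ne_zero hq0]
    have hfu0 : (1 : ℂ) - x / u ≠ 0 := by
      have := ne_aux2 hq0 hx ht1 hxn (h1 - 1/2) 0 (by push_cast; ring)
        (w := x / u) (by rw [hu]) 0
      simpa using this
    have hfuq : (1 : ℂ) - x / (q : ℂ) / u ≠ 0 := by
      have := ne_aux2 hq0 hx ht1 hxn (h1 + 1/2) 1 (by push_cast; ring)
        (w := x / (q : ℂ) / u) (by rw [div_div, ← hcu]) 0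
      simpa using this
    have hxu : x ≠ u := by
      have h := hxn 0
      push_cast at h
      rwa [show h1 + 0 - 1/2 = h1 - 1/2 by ring, ← hu] at h
    have hxqu : x ≠ (q : ℂ) * u := by
      have h := hxn 1
      push_cast at h
      rwa [show h1 + 1 - 1/2 = h1 + 1/2 by ring, hcu] at h
    have hux : u - x ≠ 0 := sub_ne_zero.mpr (Ne.symm hxu)
    have hqux : (q : ℂ) * u - x ≠ 0 := sub_ne_zero.mpr (Ne.symm hxqu)
    set X := x ^ ((h1 - l1 : ℝ) : ℂ) with hXdef
    set Su := qPochInf q ((q : ℂ) * x / u) with hSud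
    set Sv := qPochInf q ((q : ℂ) * x / v) with hSvd
    clear_value X Su Sv
    have hD0 : (1 - x / u) * Su ≠ 0 := mul_ne_zero hfu0 hSu
    have hD1 : (1 - x / (q : ℂ) / u) * ((1 - x / u) * Su) ≠ 0 := mul_ne_zero hfuq hD0
    have r1b : (x - (q : ℂ) * u) * (X * (v / u) *
          ((1 - x / (q : ℂ) / v) * ((1 - x / v) * Sv) /
            ((1 - x / (q : ℂ) / u) * ((1 - x / u) * Su)))) =
        (x - (q : ℂ) * v) * (X * ((1 - x / v) * Sv / ((1 - x / u) * Su))) := by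
      have key : ((x - (q : ℂ) * u) * (X * (v / u) *
            ((1 - x / (q : ℂ) / v) * ((1 - x / v) * Sv)))) * ((1 - x / u) * Su) =
          ((x - (q : ℂ) * v) * (X * ((1 - x / v) * Sv))) *
            ((1 - x / (q : ℂ) / u) * ((1 - x / u) * Su)) := by
        have core : (x - (q : ℂ) * u) * (v / u) * (1 - x / (q : ℂ) / v) =
            (x - (q : ℂ) * v) * (1 - x / (q : ℂ) / u) := by
          field_simp [hqC, hu0, hv0]
          ring
        linear_combination (X * ((1 - x / v) * Sv) * ((1 - x / u) * Su)) * core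
      have hdd := (div_eq_div_iff hD1 hD0).mpr key
      calc (x - (q : ℂ) * u) * (X * (v / u) *
            ((1 - x / (q : ℂ) / v) * ((1 - x / v) * Sv) /
              ((1 - x / (q : ℂ) / u) * ((1 - x / u) * Su))))
          = ((x - (q : ℂ) * u) * (X * (v / u) *
              ((1 - x / (q : ℂ) / v) * ((1 - x / v) * Sv)))) /
              ((1 - x / (q : ℂ) / u) * ((1 - x / u) * Su)) := by ring
        _ = ((x - (q : ℂ) * v) * (X * ((1 - x / v) * Sv))) / ((1 - x / u) * Su) := hdd
        _ = (x - (q : ℂ) * v) * (X * ((1 - x / v) * Sv / ((1 - x / u) * Su))) := by ring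
    have r2b : (x - v) * (u / v * X * (Sv / Su)) =
        (x - u) * (X * ((1 - x / v) * Sv / ((1 - x / u) * Su))) := by
      have key : ((x - v) * (u / v * X * Sv)) * ((1 - x / u) * Su) =
          ((x - u) * (X * ((1 - x / v) * Sv))) * Su := by
        have core : (x - v) * (u / v) * (1 - x / u) = (x - u) * (1 - x / v) := by
          field_simp [hu0, hv0]
          ring
        linear_combination (X * Sv * Su) * core
      have hdd := (div_eq_div_iff hSu hD0).mpr key
      calc (x - v) * (u / v * X * (Sv / Su))
          = ((x - v) * (u / v * X * Sv)) / Su := by ring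
        _ = ((x - u) * (X * ((1 - x / v) * Sv))) / ((1 - x / u) * Su) := hdd
        _ = (x - u) * (X * ((1 - x / v) * Sv / ((1 - x / u) * Su))) := by ring
    conv_rhs => rw [mul_left_comm]
    rw [← hf]
    linear_combination (x⁻¹ * (x - qpow q (h2 + 1/2) * t2) * f (x / (q : ℂ))) * r1b +
      (qpow q (a1 + a2) * x⁻¹ * (x - qpow q (l2 - 1/2) * t2) * f ((q : ℂ) * x)) * r2b
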